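/- arXiv:1105.3538 — 2 statements merged into one kernel-verified Lean document; each statement's English description precedes it below -/
import Mathlib

section
/- (Approximate schema theorem for crossover.) Let x ∈ Λ, let χ be a crossover-mask distribution, and let y = C(x). Then for every u ∈ Ω and every k ∈ Ω_u, y_k^{(u)} ≥ x_k^{(u)} · Σ_{m ∈ Ω} ((χ_m + χ_{m̄})/2) · [(u ⊗ m = u) ∨ (u ⊗ m̄ = u)]. -/
open Finset

noncomputable section

/-- `#u`: the number of one-bits of `u` (sum of binary digits). -/
def pc (u : ℕ) : ℕ := (Nat.digits 2 u).sum

/-- `ū`: the bitwise complement of `u` within `ℓ` bits. -/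
def cpl (ℓ u : ℕ) : ℕ := u ^^^ (2 ^ ℓ - 1)

/-- `Ω_u`: the set of `v < 2^ℓ` with `v ⊗ u = v`. -/
def omg (ℓ u : ℕ) : Finset ℕ := (Finset.range (2 ^ ℓ)).filter (fun v => v &&& u = v)

/-- `I(u)`: the set of indices `i < ℓ` where bit `i` of `u` is one. -/
def idx (ℓ u : ℕ) : Finset ℕ := (Finset.range ℓ).filter (fun i => u.testBit i)

/-- The schema average `x_k^{(u)} = Σ_{i ∈ Ω_{ū}} x_{i ⊕ k}`. -/
def schAvg (ℓ : ℕ) (x : ℕ → ℝ) (u k : ℕ) : ℝ := ∑ i ∈ omg ℓ (cpl ℓ u), x (i ^^^ k)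

/-- The Walsh transform `x̂ = W x`, with `W_{i,j} = n^{-1/2} (-1)^{i^T j}`. -/
def walsh (ℓ : ℕ) (x : ℕ → ℝ) (k : ℕ) : ℝ :=
  (Real.sqrt (2 ^ ℓ))⁻¹ * ∑ j ∈ Finset.range (2 ^ ℓ), (-1 : ℝ) ^ pc (k &&& j) * x j

/-- Proportional selection `F(x)_k = f_k x_k / Σ_j f_j x_j`. -/
def propSel (ℓ : ℕ) (f x : ℕ → ℝ) (k : ℕ) : ℝ :=
  f k * x k / ∑ j ∈ Finset.range (2 ^ ℓ), f j * x j

/-- The crossover heuristic for a crossover-mask distribution `χ`. -/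
def crossH (ℓ : ℕ) (χ : ℕ → ℝ) (x : ℕ → ℝ) (k : ℕ) : ℝ :=
  ∑ i ∈ Finset.range (2 ^ ℓ), ∑ j ∈ Finset.range (2 ^ ℓ), x i * x j *
    ∑ m ∈ Finset.range (2 ^ ℓ), ((χ m + χ (cpl ℓ m)) / 2) *
      (if (i &&& m) ^^^ (j &&& cpl ℓ m) = k then (1 : ℝ) else 0)

/-- The mutation heuristic for a mutation-mask distribution `μ`. -/
def mutH (ℓ : ℕ) (μ : ℕ → ℝ) (x : ℕ → ℝ) (k : ℕ) : ℝ :=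
  ∑ j ∈ Finset.range (2 ^ ℓ), μ (j ^^^ k) * x j

/-- Mask distribution of independent bitwise mutation with rates `p i`:
`μ_m = ∏_i p_i^{m_i} (1-p_i)^{1-m_i}` (with `0^0 = 1`). -/
def mutDist (ℓ : ℕ) (p : ℕ → ℝ) (m : ℕ) : ℝ :=
  ∏ i ∈ Finset.range ℓ, (if m.testBit i then p i else 1 - p i)

/-- Mask distribution of one-point crossover with crossover rate `c` (for `ℓ ≥ 2`). -/
def onePoint (ℓ : ℕ) (c : ℝ) (m : ℕ) : ℝ :=
  if m = 0 then 1 - c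
  else if ∃ i ∈ Finset.Ico 1 ℓ, m = 2 ^ i - 1 then c / ((ℓ : ℝ) - 1)
  else 0

/-- `hi(u)`: index of the highest one-bit of `u` (`hi 0 = 0`). -/
def hiBit (u : ℕ) : ℕ := Nat.log2 u

/-- `lo(u)`: index of the lowest one-bit of `u` (`lo 0 = ℓ - 1`). -/
def loBit (ℓ u : ℕ) : ℕ := if u = 0 then ℓ - 1 else padicValNat 2 u

/-- The defining length `L(u) = hi(u) - lo(u)`. -/
def defLen (ℓ u : ℕ) : ℕ := hiBit u - loBit ℓ u

/-!
Decompose crossover by mask: `C(x) = Σ_m c_m C_m(x)` with `c_m = (χ_m + χ_{m̄})/2`, where `C_m`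
recombines two parents under the fixed mask `m`. If `u ⊆ m` the child agrees with the first
parent on the bits of `u`, and if `u ⊆ m̄` with the second; either way `C_m` carries the mass of
the schema `k` over `u` to itself, multiplied by `Σ_j x_j = 1`. Every other mask contributes a
nonnegative amount.
-/

lemma cpl_lt {ℓ m : ℕ} (hm : m < 2 ^ ℓ) : cpl ℓ m < 2 ^ ℓ :=
  Nat.xor_lt_two_pow hm (by have := Nat.one_le_two_pow (n := ℓ); omega)

lemma cpl_and_eq_xor {ℓ u : ℕ} (m : ℕ) (hu : u < 2 ^ ℓ) : cpl ℓ m &&& u = (m &&& u) ^^^ u := by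
  rw [cpl, Nat.and_xor_distrib_right, Nat.and_comm (2 ^ ℓ - 1),
    Nat.and_two_pow_sub_one_of_lt_two_pow hu]

lemma and_cpl_eq_self_iff {ℓ a : ℕ} (u : ℕ) (ha : a < 2 ^ ℓ) :
    a &&& cpl ℓ u = a ↔ a &&& u = 0 := by
  rw [Nat.and_comm, cpl_and_eq_xor u ha, Nat.and_comm u]
  constructor
  · intro h
    simpa using congrArg (· ^^^ a) h
  · intro h
    rw [h, Nat.zero_xor]

def recombine (ℓ m i j : ℕ) : ℕ := (i &&& m) ^^^ (j &&& cpl ℓ m)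

lemma recombine_lt {ℓ i j : ℕ} (m : ℕ) (hi : i < 2 ^ ℓ) (hj : j < 2 ^ ℓ) :
    recombine ℓ m i j < 2 ^ ℓ :=
  Nat.xor_lt_two_pow (Nat.and_comm i m ▸ Nat.and_lt_two_pow m hi)
    (Nat.and_comm j _ ▸ Nat.and_lt_two_pow _ hj)

lemma recombine_and {ℓ u : ℕ} (m i j : ℕ) (hu : u < 2 ^ ℓ) :
    recombine ℓ m i j &&& u = (i &&& (m &&& u)) ^^^ (j &&& ((m &&& u) ^^^ u)) := by
  rw [recombine, Nat.and_xor_distrib_right, Nat.and_assoc, Nat.and_assoc, cpl_and_eq_xor m hu]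

lemma recombine_and_of_and_eq_self {ℓ u m : ℕ} (i j : ℕ) (hu : u < 2 ^ ℓ) (h : u &&& m = u) :
    recombine ℓ m i j &&& u = i &&& u := by
  rw [recombine_and m i j hu, Nat.and_comm m, h, Nat.xor_self, Nat.and_zero, Nat.xor_zero]

lemma recombine_and_of_and_cpl_eq_self {ℓ u m : ℕ} (i j : ℕ) (hu : u < 2 ^ ℓ)
    (h : u &&& cpl ℓ m = u) : recombine ℓ m i j &&& u = j &&& u := by
  rw [recombine_and m i j hu, Nat.and_comm m, (and_cpl_eq_self_iff m hu).1 h, Nat.and_zero,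
    Nat.zero_xor, Nat.zero_xor]

def schema (ℓ u k : ℕ) : Finset ℕ := (range (2 ^ ℓ)).filter (· &&& u = k)

lemma schAvg_eq_sum_schema {ℓ u k : ℕ} (x : ℕ → ℝ) (hk : k ∈ omg ℓ u) :
    schAvg ℓ x u k = ∑ i ∈ schema ℓ u k, x i := by
  simp only [omg, mem_filter, mem_range] at hk
  obtain ⟨hk_lt, hk_and⟩ := hk
  refine sum_nbij' (· ^^^ k) (· ^^^ k) ?_ ?_ (fun a _ => xor_cancel_right _ _)
    (fun a _ => xor_cancel_right _ _) (fun a _ => rfl)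
  · intro a ha
    simp only [omg, schema, mem_filter, mem_range] at ha ⊢
    refine ⟨Nat.xor_lt_two_pow ha.1 hk_lt, ?_⟩
    rw [Nat.and_xor_distrib_right, (and_cpl_eq_self_iff u ha.1).1 ha.2, hk_and, Nat.zero_xor]
  · intro b hb
    simp only [omg, schema, mem_filter, mem_range] at hb ⊢
    refine ⟨Nat.xor_lt_two_pow hb.1 hk_lt, ?_⟩
    rw [and_cpl_eq_self_iff u (Nat.xor_lt_two_pow hb.1 hk_lt), Nat.and_xor_distrib_right, hb.2,
      hk_and, Nat.xor_self]

def maskCross (ℓ m : ℕ) (x : ℕ → ℝ) (r : ℕ) : ℝ :=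
  ∑ i ∈ range (2 ^ ℓ), ∑ j ∈ range (2 ^ ℓ), x i * x j * if recombine ℓ m i j = r then 1 else 0

lemma crossH_eq_sum_maskCross (ℓ : ℕ) (χ x : ℕ → ℝ) (r : ℕ) :
    crossH ℓ χ x r = ∑ m ∈ range (2 ^ ℓ), (χ m + χ (cpl ℓ m)) / 2 * maskCross ℓ m x r := by
  simp only [crossH, maskCross, mul_sum]
  refine Eq.trans ?_ sum_comm
  refine sum_congr rfl fun i _ => Eq.trans ?_ sum_comm
  refine sum_congr rfl fun j _ => sum_congr rfl fun m _ => ?_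
  rw [recombine]
  ring

lemma sum_schema_maskCross (ℓ m u k : ℕ) (x : ℕ → ℝ) :
    ∑ r ∈ schema ℓ u k, maskCross ℓ m x r =
      ∑ i ∈ range (2 ^ ℓ), ∑ j ∈ range (2 ^ ℓ),
        x i * x j * if recombine ℓ m i j &&& u = k then 1 else 0 := by
  simp only [maskCross]
  rw [sum_comm]
  refine sum_congr rfl fun i hi => ?_
  rw [sum_comm]
  refine sum_congr rfl fun j hj => ?_
  rw [← mul_sum, sum_ite_eq]
  simp [schema, recombine_lt m (mem_range.1 hi) (mem_range.1 hj)]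

lemma sum_schema_maskCross_of_and_eq_self {ℓ u m : ℕ} (k : ℕ) (x : ℕ → ℝ) (hu : u < 2 ^ ℓ)
    (h : u &&& m = u) :
    ∑ r ∈ schema ℓ u k, maskCross ℓ m x r =
      (∑ i ∈ schema ℓ u k, x i) * ∑ j ∈ range (2 ^ ℓ), x j := by
  rw [sum_schema_maskCross, schema, sum_filter, sum_mul_sum]
  refine sum_congr rfl fun i _ => sum_congr rfl fun j _ => ?_
  rw [recombine_and_of_and_eq_self i j hu h]
  split_ifs <;> ring

lemma sum_schema_maskCross_of_and_cpl_eq_self {ℓ u m : ℕ} (k : ℕ) (x : ℕ → ℝ)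
    (hu : u < 2 ^ ℓ) (h : u &&& cpl ℓ m = u) :
    ∑ r ∈ schema ℓ u k, maskCross ℓ m x r =
      (∑ i ∈ range (2 ^ ℓ), x i) * ∑ j ∈ schema ℓ u k, x j := by
  rw [sum_schema_maskCross, schema, sum_filter, sum_mul_sum]
  refine sum_congr rfl fun i _ => sum_congr rfl fun j _ => ?_
  rw [recombine_and_of_and_cpl_eq_self i j hu h]
  split_ifs <;> ring

lemma maskCross_nonneg {ℓ : ℕ} {x : ℕ → ℝ} (m r : ℕ) (hx : ∀ i ∈ range (2 ^ ℓ), 0 ≤ x i) :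
    0 ≤ maskCross ℓ m x r :=
  sum_nonneg fun i hi => sum_nonneg fun j hj =>
    mul_nonneg (mul_nonneg (hx i hi) (hx j hj)) (by split_ifs <;> norm_num)

lemma sum_schema_mul_le_sum_schema_maskCross {ℓ u : ℕ} (m k : ℕ) {x : ℕ → ℝ} (hu : u < 2 ^ ℓ)
    (hx0 : ∀ i ∈ range (2 ^ ℓ), 0 ≤ x i) (hx1 : ∑ i ∈ range (2 ^ ℓ), x i = 1) :
    (∑ i ∈ schema ℓ u k, x i) * (if u &&& m = u ∨ u &&& cpl ℓ m = u then 1 else 0) ≤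
      ∑ r ∈ schema ℓ u k, maskCross ℓ m x r := by
  split_ifs with h
  · rcases h with h | h
    · rw [sum_schema_maskCross_of_and_eq_self k x hu h, hx1]
    · rw [sum_schema_maskCross_of_and_cpl_eq_self k x hu h, hx1, one_mul, mul_one]
  · rw [mul_zero]
    exact sum_nonneg fun r _ => maskCross_nonneg m r hx0

theorem approximate_schema_theorem_for_crossover_general
    (ℓ : ℕ) (x χ : ℕ → ℝ)
    (hx0 : ∀ i ∈ Finset.range (2 ^ ℓ), 0 ≤ x i)
    (hx1 : ∑ i ∈ Finset.range (2 ^ ℓ), x i = 1)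
    (hχ0 : ∀ m ∈ Finset.range (2 ^ ℓ), 0 ≤ χ m)
    (u : ℕ) (hu : u < 2 ^ ℓ) (k : ℕ) (hk : k ∈ omg ℓ u) :
    schAvg ℓ (crossH ℓ χ x) u k ≥
      schAvg ℓ x u k *
        ∑ m ∈ Finset.range (2 ^ ℓ), ((χ m + χ (cpl ℓ m)) / 2) *
          (if u &&& m = u ∨ u &&& cpl ℓ m = u then (1 : ℝ) else 0) := by
  rw [schAvg_eq_sum_schema _ hk, schAvg_eq_sum_schema _ hk, ge_iff_le, mul_sum]
  simp only [crossH_eq_sum_maskCross]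
  rw [sum_comm]
  refine sum_le_sum fun m hm => ?_
  have hweight : 0 ≤ (χ m + χ (cpl ℓ m)) / 2 :=
    div_nonneg (add_nonneg (hχ0 m hm) (hχ0 _ (mem_range.2 (cpl_lt (mem_range.1 hm))))) two_pos.le
  rw [← mul_sum, mul_left_comm]
  exact mul_le_mul_of_nonneg_left (sum_schema_mul_le_sum_schema_maskCross m k hu hx0 hx1) hweight

/-- **Approximate schema theorem for crossover.**  For `x ∈ Λ`, a crossover-mask
distribution `χ`, `y = C(x)`, `u ∈ Ω` and `k ∈ Ω_u`:
`y_k^{(u)} ≥ x_k^{(u)} Σ_m ((χ_m + χ_{m̄})/2) [(u⊗m = u) ∨ (u⊗m̄ = u)]`. -/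
theorem approximate_schema_theorem_for_crossover
    (ℓ : ℕ) (hℓ : 1 ≤ ℓ) (x χ : ℕ → ℝ)
    (hx0 : ∀ i ∈ Finset.range (2 ^ ℓ), 0 ≤ x i)
    (hx1 : ∑ i ∈ Finset.range (2 ^ ℓ), x i = 1)
    (hχ0 : ∀ m ∈ Finset.range (2 ^ ℓ), 0 ≤ χ m)
    (hχ1 : ∑ m ∈ Finset.range (2 ^ ℓ), χ m = 1)
    (u : ℕ) (hu : u < 2 ^ ℓ) (k : ℕ) (hk : k ∈ omg ℓ u) :
    schAvg ℓ (crossH ℓ χ x) u k ≥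
      schAvg ℓ x u k *
        ∑ m ∈ Finset.range (2 ^ ℓ), ((χ m + χ (cpl ℓ m)) / 2) *
          (if u &&& m = u ∨ u &&& cpl ℓ m = u then (1 : ℝ) else 0) :=
  approximate_schema_theorem_for_crossover_general ℓ x χ hx0 hx1 hχ0 u hu k hk
end
end

section
/- Let x ∈ Λ, let U be the mutation heuristic for a mutation-mask distribution μ, let y = U(x), and let u ∈ Ω. Then ŷ^{(u)} = Û^{(u)} x̂^{(u)}, where Û^{(u)} = W^{(u)} U^{(u)} W^{(u)}, x̂^{(u)} is the vector with entries x̂_k^{(u)} = 2^{#ū/2}(Wx)_k for k ∈ Ω_u, and similarly for ŷ^{(u)}. -/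
open Finset

noncomputable section

/-!
The characters `χ_k(v) = (-1)^{#(k ⊗ v)}` are multiplicative in `⊕`, so the Walsh transform turns
the `⊕`-convolution `U(x)` into a pointwise product: `(W U x)_k = (Σ_m χ_k(m) μ_m) (W x)_k`.
On `Ω_u` the same computation, together with the orthogonality
`Σ_{v ∈ Ω_u} χ_v(t) = 2^{#u} [t = 0]` for `t ∈ Ω_u`, shows that `W^{(u)} U^{(u)} W^{(u)}` is
diagonal with entries `Σ_{m ∈ Ω_u} χ_k(m) μ^{(u)}_m`. Since every `m` splits uniquely as
`a ⊕ b` with `a ∈ Ω_u`, `b ∈ Ω_ū`, and `χ_k(b) = 1` for `k ∈ Ω_u`, this entry is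
`Σ_m χ_k(m) μ_m` again.
-/

lemma pc_eq_mod_two_add_pc_div_two (n : ℕ) : pc n = n % 2 + pc (n / 2) := by
  rcases Nat.eq_zero_or_pos n with rfl | hn
  · rfl
  · rw [pc, Nat.digits_def' one_lt_two hn, List.sum_cons, pc]

lemma pc_eq_length_bitIndices (n : ℕ) : pc n = n.bitIndices.length := by
  induction n using Nat.strong_induction_on with
  | _ n ih =>
    rcases Nat.eq_zero_or_pos n with rfl | hn
    · rfl
    rw [pc_eq_mod_two_add_pc_div_two, ih _ (Nat.div_lt_self hn one_lt_two)]
    rcases Nat.even_or_odd' n with ⟨m, rfl | rfl⟩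
    · simp [Nat.bitIndices_two_mul]
    · rw [Nat.bitIndices_two_mul_add_one, show (2 * m + 1) / 2 = m by omega]
      simp [add_comm]

lemma pc_two_pow (b : ℕ) : pc (2 ^ b) = 1 := by
  simp [pc_eq_length_bitIndices]

lemma neg_one_pow_pc_xor {R : Type*} [CommRing R] (a b : ℕ) :
    (-1 : R) ^ pc (a ^^^ b) = (-1) ^ pc a * (-1) ^ pc b := by
  induction a using Nat.strong_induction_on generalizing b with
  | _ a ih =>
    rcases Nat.eq_zero_or_pos a with rfl | ha
    · simp [pc]
    rw [pc_eq_mod_two_add_pc_div_two (a ^^^ b), pc_eq_mod_two_add_pc_div_two a,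
      pc_eq_mod_two_add_pc_div_two b, Nat.xor_div_two, pow_add, pow_add, pow_add,
      ih _ (Nat.div_lt_self ha one_lt_two), Nat.xor_mod_two_eq, ← neg_one_pow_eq_pow_mod_two,
      ← neg_one_pow_eq_pow_mod_two, ← neg_one_pow_eq_pow_mod_two, pow_add]
    ring

lemma and_eq_left_iff_testBit {a b : ℕ} : a &&& b = a ↔ ∀ i, a.testBit i → b.testBit i := by
  refine ⟨fun h i hi => ?_, fun h => Nat.eq_of_testBit_eq fun i => ?_⟩
  · rw [← h, Nat.testBit_and] at hi
    exact (Bool.and_eq_true _ _ ▸ hi).2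
  · cases hi : a.testBit i <;> simp [Nat.testBit_and, hi, h i]

lemma mem_omg {ℓ u v : ℕ} : v ∈ omg ℓ u ↔ v < 2 ^ ℓ ∧ v &&& u = v := by
  simp [omg]

lemma mem_omg_iff_subset {ℓ u v : ℕ} (hu : u < 2 ^ ℓ) :
    v ∈ omg ℓ u ↔ equivBitIndices v ⊆ equivBitIndices u := by
  have hbits : equivBitIndices v ⊆ equivBitIndices u ↔ ∀ i, v.testBit i → u.testBit i := by
    simp [subset_iff]
  rw [hbits, ← and_eq_left_iff_testBit, mem_omg]
  exact ⟨And.right, fun h => ⟨(h ▸ Nat.and_le_right).trans_lt hu, h⟩⟩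

lemma card_omg {ℓ u : ℕ} (hu : u < 2 ^ ℓ) : #(omg ℓ u) = 2 ^ pc u := by
  rw [pc_eq_length_bitIndices, ← List.toFinset_card_of_nodup Nat.bitIndices_nodup,
    ← card_powerset]
  refine card_nbij' equivBitIndices equivBitIndices.symm (fun v hv => ?_) (fun s hs => ?_)
    (fun v _ => by simp) fun s _ => by simp
  · exact mem_powerset.2 ((mem_omg_iff_subset hu).1 hv)
  · obtain ⟨v, rfl⟩ := equivBitIndices.surjective s
    simpa using (mem_omg_iff_subset hu).2 (mem_powerset.1 hs)

lemma and_cpl_self {ℓ u : ℕ} (hu : u < 2 ^ ℓ) : u &&& cpl ℓ u = 0 := by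
  rw [cpl, Nat.and_xor_distrib_left, Nat.and_self, Nat.and_two_pow_sub_one_of_lt_two_pow hu,
    Nat.xor_self]

lemma and_cpl_eq_zero_of_and_eq {ℓ u a : ℕ} (hu : u < 2 ^ ℓ) (ha : a &&& u = a) :
    a &&& cpl ℓ u = 0 := by
  rw [← ha, Nat.and_assoc, and_cpl_self hu, Nat.and_zero]

lemma and_eq_zero_of_and_cpl_eq {ℓ u b : ℕ} (hu : u < 2 ^ ℓ) (hb : b &&& cpl ℓ u = b) :
    b &&& u = 0 := by
  rw [← hb, Nat.and_assoc, Nat.and_comm (cpl ℓ u), and_cpl_self hu, Nat.and_zero]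

lemma and_xor_and_cpl {ℓ m : ℕ} (u : ℕ) (hm : m < 2 ^ ℓ) : m &&& u ^^^ m &&& cpl ℓ u = m := by
  rw [← Nat.and_xor_distrib_left, cpl, ← Nat.xor_assoc, Nat.xor_self, Nat.zero_xor,
    Nat.and_two_pow_sub_one_of_lt_two_pow hm]

lemma sum_xor_left {M : Type*} [AddCommMonoid M] {s : Finset ℕ} {i : ℕ}
    (hs : ∀ w ∈ s, i ^^^ w ∈ s) (f : ℕ → M) : ∑ w ∈ s, f (i ^^^ w) = ∑ w ∈ s, f w :=
  sum_nbij' (i ^^^ ·) (i ^^^ ·) hs hs (fun _ _ => Nat.xor_xor_cancel_left i _)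
    (fun _ _ => Nat.xor_xor_cancel_left i _) fun _ _ => rfl

lemma xor_mem_range_two_pow {ℓ i w : ℕ} (hi : i ∈ range (2 ^ ℓ)) (hw : w ∈ range (2 ^ ℓ)) :
    i ^^^ w ∈ range (2 ^ ℓ) := by
  rw [mem_range] at *
  exact Nat.xor_lt_two_pow hi hw

lemma xor_mem_omg {ℓ u i w : ℕ} (hi : i ∈ omg ℓ u) (hw : w ∈ omg ℓ u) : i ^^^ w ∈ omg ℓ u := by
  rw [mem_omg] at *
  exact ⟨Nat.xor_lt_two_pow hi.1 hw.1, by rw [Nat.and_xor_distrib_right, hi.2, hw.2]⟩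

lemma sum_omg_neg_one_pow_pc_and {R : Type*} [CommRing R] {ℓ u t : ℕ} (hu : u < 2 ^ ℓ)
    (ht : t &&& u = t) :
    ∑ v ∈ omg ℓ u, (-1 : R) ^ pc (v &&& t) = if t = 0 then 2 ^ pc u else 0 := by
  split_ifs with h0
  · simp [h0, pc, card_omg hu]
  obtain ⟨b, hb⟩ := Nat.exists_testBit_of_ne_zero h0
  have hub : u.testBit b := and_eq_left_iff_testBit.1 ht b hb
  have hbit : 2 ^ b ∈ omg ℓ u := mem_omg.2 ⟨(Nat.ge_two_pow_of_testBit hub).trans_lt hu, by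
    rw [Nat.and_comm, Nat.and_two_pow, hub, Bool.toNat_true, one_mul]⟩
  refine sum_involution (fun v _ => v ^^^ 2 ^ b) (fun v _ => ?_) (fun v _ _ => ?_)
    (fun v hv => xor_mem_omg hv hbit) fun v _ => by simp
  · rw [Nat.and_xor_distrib_right, neg_one_pow_pc_xor, Nat.two_pow_and, hb, Bool.toNat_true,
      mul_one, pc_two_pow]
    ring
  · simp

lemma sum_range_eq_sum_omg_sum_omg_cpl {M : Type*} [AddCommMonoid M] {ℓ u : ℕ}
    (hu : u < 2 ^ ℓ) (f : ℕ → M) :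
    ∑ m ∈ range (2 ^ ℓ), f m = ∑ a ∈ omg ℓ u, ∑ b ∈ omg ℓ (cpl ℓ u), f (a ^^^ b) := by
  rw [← sum_product']
  refine sum_nbij' (fun m => (m &&& u, m &&& cpl ℓ u)) (fun p => p.1 ^^^ p.2) (fun m hm => ?_)
    (fun p hp => ?_) (fun m hm => and_xor_and_cpl u (by simpa using hm)) (fun p hp => ?_)
    fun m hm => by rw [and_xor_and_cpl u (by simpa using hm)]
  · have hm : m < 2 ^ ℓ := by simpa using hm
    simp [mem_omg, Nat.and_le_left.trans_lt hm]
  all_goals obtain ⟨⟨ha, hau⟩, ⟨hb, hbc⟩⟩ := And.imp mem_omg.1 mem_omg.1 (mem_product.1 hp)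
  · exact mem_range.2 (Nat.xor_lt_two_pow ha hb)
  · simp [Nat.and_xor_distrib_right, hau, hbc, and_cpl_eq_zero_of_and_eq hu hau,
      and_eq_zero_of_and_cpl_eq hu hbc]

lemma walsh_mutH (ℓ : ℕ) (μ x : ℕ → ℝ) (k : ℕ) :
    walsh ℓ (mutH ℓ μ x) k =
      (∑ m ∈ range (2 ^ ℓ), (-1 : ℝ) ^ pc (k &&& m) * μ m) * walsh ℓ x k := by
  have hconv : ∀ i ∈ range (2 ^ ℓ),
      ∑ j ∈ range (2 ^ ℓ), (-1 : ℝ) ^ pc (k &&& j) * (μ (i ^^^ j) * x i) =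
        (∑ m ∈ range (2 ^ ℓ), (-1 : ℝ) ^ pc (k &&& m) * μ m) *
          ((-1 : ℝ) ^ pc (k &&& i) * x i) := by
    intro i hi
    rw [← sum_xor_left (fun w hw => xor_mem_range_two_pow hi hw), sum_mul]
    refine sum_congr rfl fun m _ => ?_
    rw [Nat.xor_xor_cancel_left, Nat.and_xor_distrib_left, neg_one_pow_pc_xor]
    ring
  rw [walsh, walsh, mul_left_comm]
  congr 1
  simp only [mutH, mul_sum]
  rw [sum_comm]
  exact sum_congr rfl hconv

lemma sum_omg_neg_one_pow_mul_schAvg {ℓ u k : ℕ} (hu : u < 2 ^ ℓ) (hk : k ∈ omg ℓ u)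
    (μ : ℕ → ℝ) :
    ∑ m ∈ omg ℓ u, (-1 : ℝ) ^ pc (m &&& k) * schAvg ℓ μ u m =
      ∑ m ∈ range (2 ^ ℓ), (-1 : ℝ) ^ pc (k &&& m) * μ m := by
  rw [sum_range_eq_sum_omg_sum_omg_cpl hu]
  refine sum_congr rfl fun a _ => ?_
  rw [schAvg, mul_sum]
  refine sum_congr rfl fun b hb => ?_
  have hkb : k &&& b = 0 := by
    rw [← (mem_omg.1 hk).2, Nat.and_assoc, Nat.and_comm u,
      and_eq_zero_of_and_cpl_eq hu (mem_omg.1 hb).2, Nat.and_zero]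
  rw [Nat.and_xor_distrib_left, hkb, Nat.xor_zero, Nat.and_comm, Nat.xor_comm]

lemma sum_sum_walsh_mul_conv_mul_walsh {ℓ u k j : ℕ} (hu : u < 2 ^ ℓ) (hk : k ∈ omg ℓ u)
    (hj : j ∈ omg ℓ u) (g : ℕ → ℝ) :
    ∑ v ∈ omg ℓ u, ∑ w ∈ omg ℓ u,
        ((Real.sqrt 2 ^ pc u)⁻¹ * (-1 : ℝ) ^ pc (k &&& v)) * g (v ^^^ w) *
          ((Real.sqrt 2 ^ pc u)⁻¹ * (-1 : ℝ) ^ pc (w &&& j)) =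
      if k = j then ∑ m ∈ omg ℓ u, (-1 : ℝ) ^ pc (m &&& j) * g m else 0 := by
  set G := ∑ m ∈ omg ℓ u, (-1 : ℝ) ^ pc (m &&& j) * g m
  have hinner : ∀ v ∈ omg ℓ u,
      ∑ w ∈ omg ℓ u, ((Real.sqrt 2 ^ pc u)⁻¹ * (-1 : ℝ) ^ pc (k &&& v)) * g (v ^^^ w) *
          ((Real.sqrt 2 ^ pc u)⁻¹ * (-1 : ℝ) ^ pc (w &&& j)) =
        ((Real.sqrt 2 ^ pc u)⁻¹ ^ 2 * G) * (-1 : ℝ) ^ pc (v &&& (k ^^^ j)) := by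
    intro v hv
    rw [← sum_xor_left (fun w hw => xor_mem_omg hv hw)]
    simp only [G, mul_sum, sum_mul]
    refine sum_congr rfl fun m _ => ?_
    rw [Nat.xor_xor_cancel_left, Nat.and_xor_distrib_right, Nat.and_xor_distrib_left,
      neg_one_pow_pc_xor, neg_one_pow_pc_xor, Nat.and_comm k]
    ring
  have htu : (k ^^^ j) &&& u = k ^^^ j := by
    rw [Nat.and_xor_distrib_right, (mem_omg.1 hk).2, (mem_omg.1 hj).2]
  rw [sum_congr rfl hinner, ← mul_sum, sum_omg_neg_one_pow_pc_and hu htu]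
  by_cases hkj : k = j
  · have hsq : (Real.sqrt 2 ^ pc u) ^ 2 = 2 ^ pc u := by
      rw [← pow_mul, mul_comm, pow_mul, Real.sq_sqrt zero_le_two]
    simp only [hkj, Nat.xor_self, if_true, inv_pow, hsq]
    field_simp
  · simp [hkj, xor_eq_zero_iff]

theorem mutation_schema_walsh_equation_general
    (ℓ : ℕ) (x μ : ℕ → ℝ)
    (u : ℕ) (hu : u < 2 ^ ℓ) (k : ℕ) (hk : k ∈ omg ℓ u) :
    Real.sqrt 2 ^ pc (cpl ℓ u) * walsh ℓ (mutH ℓ μ x) k =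
      ∑ j ∈ omg ℓ u,
        (∑ v ∈ omg ℓ u, ∑ w ∈ omg ℓ u,
            ((Real.sqrt 2 ^ pc u)⁻¹ * (-1 : ℝ) ^ pc (k &&& v)) * schAvg ℓ μ u (v ^^^ w) *
              ((Real.sqrt 2 ^ pc u)⁻¹ * (-1 : ℝ) ^ pc (w &&& j))) *
          (Real.sqrt 2 ^ pc (cpl ℓ u) * walsh ℓ x j) := by
  rw [sum_congr rfl fun j hj => by rw [sum_sum_walsh_mul_conv_mul_walsh hu hk hj, ite_mul,
    zero_mul], sum_ite_eq, if_pos hk, sum_omg_neg_one_pow_mul_schAvg hu hk, walsh_mutH]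
  ring

/-- For `x ∈ Λ`, a mutation-mask distribution `μ`, `y = U(x)` and `u ∈ Ω`:
`ŷ^{(u)} = Û^{(u)} x̂^{(u)}`, where `Û^{(u)} = W^{(u)} U^{(u)} W^{(u)}`,
`x̂_k^{(u)} = 2^{#ū/2} (Wx)_k`, and `U^{(u)}_{v,w} = μ^{(u)}_{v⊕w}`. -/
theorem mutation_schema_walsh_equation
    (ℓ : ℕ) (hℓ : 1 ≤ ℓ) (x μ : ℕ → ℝ)
    (hx0 : ∀ i ∈ Finset.range (2 ^ ℓ), 0 ≤ x i)
    (hx1 : ∑ i ∈ Finset.range (2 ^ ℓ), x i = 1)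
    (hμ0 : ∀ m ∈ Finset.range (2 ^ ℓ), 0 ≤ μ m)
    (hμ1 : ∑ m ∈ Finset.range (2 ^ ℓ), μ m = 1)
    (u : ℕ) (hu : u < 2 ^ ℓ) (k : ℕ) (hk : k ∈ omg ℓ u) :
    Real.sqrt 2 ^ pc (cpl ℓ u) * walsh ℓ (mutH ℓ μ x) k =
      ∑ j ∈ omg ℓ u,
        (∑ v ∈ omg ℓ u, ∑ w ∈ omg ℓ u,
            ((Real.sqrt 2 ^ pc u)⁻¹ * (-1 : ℝ) ^ pc (k &&& v)) * schAvg ℓ μ u (v ^^^ w) *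
              ((Real.sqrt 2 ^ pc u)⁻¹ * (-1 : ℝ) ^ pc (w &&& j))) *
          (Real.sqrt 2 ^ pc (cpl ℓ u) * walsh ℓ x j) :=
  mutation_schema_walsh_equation_general ℓ x μ u hu k hk
end
end
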